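/- Let D ⊆ B be Banach spaces with ‖·‖_D ≥ ‖·‖_B, M ⊆ B* a bounded set, and suppose: (a) the map ξ ↦ A[ξ] from B* to bounded operators D → B satisfies ‖A[ξ] − A[η]‖_{D→B} ≤ c‖ξ − η‖_{D*}; (b) for each continuous curve ξ. in M, the generated backward propagators satisfy ‖U^{t,s}[ξ.]‖_{D→D} ≤ C and ‖U^{t,s}[ξ.]‖_{B→B} ≤ C. Then for any two curves ξ¹, ξ² in C_μ([0,r],M) and μ ∈ M, ‖(V^{t,0}[ξ¹.] − V^{t,0}[ξ².]) μ‖_{D*} ≤ c C² t ‖μ‖_{B*} · sup_{s∈[0,t]} ‖ξ¹_s − ξ²_s‖_{D*}, where V^{t,0}[ξ.] = (U^{0,t}[ξ.])*. -/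

import Mathlib

/-!
Duhamel's formula. For `f ∈ D`, the curve `u ↦ U1^{0,u} U2^{u,t} f` runs on `[0, t]` from
`U2^{0,t} f` to `U1^{0,t} f` with derivative `U1^{0,u} (A[ξ¹_u] - A[ξ²_u]) UD2^{u,t} f`, of norm at
most `c C² K ‖f‖_D`. The mean value inequality bounds `‖(U1^{0,t} - U2^{0,t}) f‖_B` by
`c C² K t ‖f‖_D`, and pairing with `μ` gives the estimate in `D*`.

The derivative of `u ↦ U2^{u,t} f` only lies in the closure of `D` in `B`, so the product rule
needs the strong continuity of `U1` there; it follows from the bound `‖U1‖ ≤ C` by density.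
-/

open NormedSpace

/-- The Banach-space adjoint (dual map) of a bounded operator `u : E →L[ℝ] F`,
acting on continuous duals by precomposition: `opDual u φ = φ ∘ u`. -/
noncomputable def opDual {E F : Type*} [NormedAddCommGroup E] [NormedSpace ℝ E]
    [NormedAddCommGroup F] [NormedSpace ℝ F] (u : E →L[ℝ] F) :
    StrongDual ℝ F →L[ℝ] StrongDual ℝ E :=
  (ContinuousLinearMap.compSL E F ℝ (RingHom.id ℝ) (RingHom.id ℝ)).flip u

open Filter Topology Asymptotics Set

section Duality

variable {E F G : Type*} [NormedAddCommGroup E] [NormedSpace ℝ E]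
  [NormedAddCommGroup F] [NormedSpace ℝ F] [NormedAddCommGroup G] [NormedSpace ℝ G]

theorem opDual_apply (u : E →L[ℝ] F) (φ : StrongDual ℝ F) : opDual u φ = φ.comp u := rfl

theorem norm_opDual_apply_le (u : E →L[ℝ] F) (φ : StrongDual ℝ F) :
    ‖opDual u φ‖ ≤ ‖φ‖ * ‖u‖ :=
  φ.opNorm_comp_le u

theorem opDual_opDual_sub (ι : E →L[ℝ] F) (U V : F →L[ℝ] G) (φ : StrongDual ℝ G) :
    opDual ι (opDual U φ - opDual V φ) = opDual ((U - V).comp ι) φ := by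
  ext x
  simp [opDual_apply]

end Duality

section StrongContinuity

variable {α E F : Type*} [NormedAddCommGroup E] [NormedSpace ℝ E]
  [NormedAddCommGroup F] [NormedSpace ℝ F]

theorem tendsto_clm_apply_of_mem_closure {l : Filter α} {T : α → E →L[ℝ] F} {T₀ : E →L[ℝ] F}
    {S : Set E} {C : ℝ} (hbound : ∀ᶠ a in l, ‖T a‖ ≤ C)
    (hS : ∀ x ∈ S, Tendsto (fun a => T a x) l (𝓝 (T₀ x))) {z : E} (hz : z ∈ closure S) :
    Tendsto (fun a => T a z) l (𝓝 (T₀ z)) := by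
  refine Metric.tendsto_nhds.2 fun ε hε => ?_
  obtain ⟨δ, hδ, hδε⟩ := exists_pos_mul_lt (half_pos hε) (C + ‖T₀‖)
  obtain ⟨x, hxS, hzx⟩ := Metric.mem_closure_iff.1 hz δ hδ
  filter_upwards [hbound, Metric.tendsto_nhds.1 (hS x hxS) (ε / 2) (half_pos hε)] with a ha hax
  have hC : 0 ≤ C := (norm_nonneg _).trans ha
  calc dist (T a z) (T₀ z) ≤ dist (T a z) (T a x) + dist (T a x) (T₀ x) + dist (T₀ x) (T₀ z) :=
        dist_triangle4 _ _ _ _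
    _ ≤ C * dist z x + dist (T a x) (T₀ x) + ‖T₀‖ * dist z x := by
        gcongr
        · exact ((T a).dist_le_opNorm z x).trans (by gcongr)
        · rw [dist_comm z]; exact T₀.dist_le_opNorm x z
    _ < ε := by nlinarith [norm_nonneg T₀]

end StrongContinuity

section StrongDerivative

variable {E F : Type*} [NormedAddCommGroup E] [NormedSpace ℝ E]
  [NormedAddCommGroup F] [NormedSpace ℝ F]

/-- Unlike `HasDerivWithinAt.clm_apply`, `T` need only be differentiable at the single vector
`w s` and continuous at `w'`, given a local bound on its norm. -/
theorem HasDerivWithinAt.clm_apply_of_eventually_norm_le {T : ℝ → E →L[ℝ] F} {w : ℝ → E}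
    {w' : E} {a : F} {S : Set ℝ} {s C : ℝ} (hw : HasDerivWithinAt w w' S s)
    (hT : HasDerivWithinAt (fun u => T u (w s)) a S s)
    (hTw' : Tendsto (fun u => T u w') (𝓝[S] s) (𝓝 (T s w')))
    (hbound : ∀ᶠ u in 𝓝[S] s, ‖T u‖ ≤ C) :
    HasDerivWithinAt (fun u => T u (w u)) (a + T s w') S s := by
  have hrest : HasDerivWithinAt (fun u => T u (w u - w s)) (T s w') S s := by
    rw [hasDerivWithinAt_iff_isLittleO]
    have hremainder : (fun u => T u (w u - w s - (u - s) • w')) =o[𝓝[S] s] (fun u => u - s) :=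
      (IsBigO.of_bound C (hbound.mono fun u hu => (T u).le_of_opNorm_le hu _)).trans_isLittleO
        (hasDerivWithinAt_iff_isLittleO.1 hw)
    have hdirection : (fun u => (u - s) • (T u w' - T s w')) =o[𝓝[S] s] (fun u => u - s) := by
      simpa using (isBigO_refl (fun u => u - s) (𝓝[S] s)).smul_isLittleO
        ((isLittleO_one_iff ℝ).2 (tendsto_sub_nhds_zero_iff.2 hTw'))
    refine (hremainder.add hdirection).congr (fun u => ?_) fun _ => rfl
    simp only [map_sub, map_smul, sub_self, map_zero, smul_sub]
    abel
  refine (hT.add hrest).congr (fun u _ => ?_) ?_ <;> simp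

end StrongDerivative

section Propagator

variable {D B : Type*} [NormedAddCommGroup D] [NormedSpace ℝ D]
  [NormedAddCommGroup B] [NormedSpace ℝ B]
  {ι : D →L[ℝ] B} {A1 A2 : ℝ → D →L[ℝ] B} {U1 U2 : ℝ → ℝ → B →L[ℝ] B}
  {UD2 : ℝ → ℝ → D →L[ℝ] D} {t₀ t C : ℝ}

theorem mem_closure_range_of_hasDerivAt {w : ℝ → B} {w' : B} {s : ℝ}
    (hw : HasDerivAt w w' s) (hrange : ∀ u, w u ∈ range ι) :
    w' ∈ closure (range ι) := by
  have hspan : Submodule.span ℝ (w '' univ) ≤ LinearMap.range ι.toLinearMap :=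
    Submodule.span_le.2 <| image_subset_iff.2 fun u _ => hrange u
  rw [← hw.deriv]
  exact closure_mono hspan (range_deriv_subset_closure_span_image w dense_univ ⟨s, rfl⟩)

theorem hasDerivWithinAt_propagator_interpolation
    (hgen1 : ∀ (f : D) (s : ℝ), t₀ ≤ s →
      HasDerivAt (fun u => U1 t₀ u (ι f)) (U1 t₀ s (A1 s f)) s)
    (hgen2 : ∀ (f : D) (s : ℝ), s ≤ t →
      HasDerivAt (fun v => U2 v t (ι f)) (-(A2 s (UD2 s t f))) s)
    (hcompat2 : ∀ (s : ℝ) (f : D), U2 s t (ι f) = ι (UD2 s t f))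
    (hU1B : ∀ s, t₀ ≤ s → ‖U1 t₀ s‖ ≤ C) (f : D) {s : ℝ} (hs : s ∈ Icc t₀ t) :
    HasDerivWithinAt (fun u => U1 t₀ u (U2 u t (ι f)))
      (U1 t₀ s ((A1 s - A2 s) (UD2 s t f))) (Icc t₀ t) s := by
  have hbound : ∀ᶠ u in 𝓝[Icc t₀ t] s, ‖U1 t₀ u‖ ≤ C :=
    eventually_mem_nhdsWithin.mono fun u hu => hU1B u hu.1
  have hclosure :=
    mem_closure_range_of_hasDerivAt (hgen2 f s hs.2) fun u => ⟨_, (hcompat2 u f).symm⟩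
  have hcont := tendsto_clm_apply_of_mem_closure hbound
    (by
      rintro - ⟨g, rfl⟩
      exact (hgen1 g s hs.1).continuousAt.continuousWithinAt) hclosure
  have hT : HasDerivWithinAt (fun u => U1 t₀ u (U2 s t (ι f))) (U1 t₀ s (A1 s (UD2 s t f)))
      (Icc t₀ t) s := by
    simpa only [hcompat2] using (hgen1 (UD2 s t f) s hs.1).hasDerivWithinAt
  convert ((hgen2 f s hs.2).hasDerivWithinAt).clm_apply_of_eventually_norm_le hT hcont hbound
    using 1
  simp [sub_eq_add_neg]

theorem norm_propagator_sub_le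
    (hgen1 : ∀ (f : D) (s : ℝ), t₀ ≤ s →
      HasDerivAt (fun u => U1 t₀ u (ι f)) (U1 t₀ s (A1 s f)) s)
    (hgen2 : ∀ (f : D) (s : ℝ), s ≤ t →
      HasDerivAt (fun v => U2 v t (ι f)) (-(A2 s (UD2 s t f))) s)
    (hcompat2 : ∀ (s : ℝ) (f : D), U2 s t (ι f) = ι (UD2 s t f))
    (hU1B : ∀ s, t₀ ≤ s → ‖U1 t₀ s‖ ≤ C) (hid1 : U1 t₀ t₀ = ContinuousLinearMap.id ℝ B)
    (hid2 : U2 t t = ContinuousLinearMap.id ℝ B) (ht : t₀ ≤ t) (f : D) {L : ℝ}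
    (hL : ∀ s ∈ Icc t₀ t, ‖U1 t₀ s ((A1 s - A2 s) (UD2 s t f))‖ ≤ L) :
    ‖U1 t₀ t (ι f) - U2 t₀ t (ι f)‖ ≤ L * (t - t₀) := by
  have := (convex_Icc t₀ t).norm_image_sub_le_of_norm_hasDerivWithin_le
    (fun s hs => hasDerivWithinAt_propagator_interpolation hgen1 hgen2 hcompat2 hU1B f hs) hL
    (left_mem_Icc.2 ht) (right_mem_Icc.2 ht)
  simpa [hid1, hid2, Real.norm_eq_abs, abs_of_nonneg (sub_nonneg.2 ht)] using this

end Propagator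

/-- The `D*`-norm of `ξ ∈ B*` is `‖opDual ι ξ‖`, and `V^{t,0}[ξ.] = (U^{0,t}[ξ.])*`. -/
theorem dual_propagator_lipschitz_in_coefficient_curve_general
    {D B : Type*} [NormedAddCommGroup D] [NormedSpace ℝ D]
    [NormedAddCommGroup B] [NormedSpace ℝ B]
    (ι : D →L[ℝ] B)
    (c C : ℝ) (hc : 0 ≤ c) (hC : 0 ≤ C)
    (A : StrongDual ℝ B → D →L[ℝ] B)
    (hALip : ∀ ξ η : StrongDual ℝ B, ‖A ξ - A η‖ ≤ c * ‖opDual ι (ξ - η)‖)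
    (r : ℝ) (μ : StrongDual ℝ B)
    (ξ1 ξ2 : ℝ → StrongDual ℝ B)
    (U1 U2 : ℝ → ℝ → B →L[ℝ] B) (UD2 : ℝ → ℝ → D →L[ℝ] D)
    (hcompat2 : ∀ (t s : ℝ) (f : D), U2 t s (ι f) = ι (UD2 t s f))
    (hU1B : ∀ t s : ℝ, t ≤ s → ‖U1 t s‖ ≤ C)
    (hU2D : ∀ t s : ℝ, t ≤ s → ‖UD2 t s‖ ≤ C)
    (hid1 : ∀ t : ℝ, U1 t t = ContinuousLinearMap.id ℝ B)
    (hid2 : ∀ t : ℝ, U2 t t = ContinuousLinearMap.id ℝ B)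
    -- generation of U1, U2 by the frozen families A[ξ1_t], A[ξ2_t] on D:
    (hgen1 : ∀ (t : ℝ) (f : D) (s : ℝ), t ≤ s →
      HasDerivAt (fun u : ℝ => U1 t u (ι f)) (U1 t s (A (ξ1 s) f)) s)
    (hgen2 : ∀ (u : ℝ) (f : D) (s : ℝ), s ≤ u →
      HasDerivAt (fun v : ℝ => U2 v u (ι f)) (-(A (ξ2 s) (UD2 s u f))) s) :
    ∀ t ∈ Set.Icc (0 : ℝ) r, ∀ K : ℝ,
      (∀ s ∈ Set.Icc (0 : ℝ) t, ‖opDual ι (ξ1 s - ξ2 s)‖ ≤ K) →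
      ‖opDual ι (opDual (U1 0 t) μ - opDual (U2 0 t) μ)‖ ≤
        c * C ^ 2 * t * ‖μ‖ * K := by
  intro t ht K hK
  have hK0 : 0 ≤ K := (norm_nonneg _).trans (hK 0 ⟨le_rfl, ht.1⟩)
  have hintegrand : ∀ f : D, ∀ s ∈ Icc 0 t,
      ‖U1 0 s ((A (ξ1 s) - A (ξ2 s)) (UD2 s t f))‖ ≤ c * C ^ 2 * K * ‖f‖ := by
    intro f s hs
    calc ‖U1 0 s ((A (ξ1 s) - A (ξ2 s)) (UD2 s t f))‖
        ≤ ‖U1 0 s‖ * (‖A (ξ1 s) - A (ξ2 s)‖ * (‖UD2 s t‖ * ‖f‖)) :=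
          (U1 0 s).le_opNorm_of_le ((A (ξ1 s) - A (ξ2 s)).le_opNorm_of_le ((UD2 s t).le_opNorm f))
      _ ≤ C * (c * K * (C * ‖f‖)) := by
          gcongr
          exacts [hU1B 0 s hs.1, (hALip _ _).trans (by gcongr; exact hK s hs), hU2D s t hs.2]
      _ = c * C ^ 2 * K * ‖f‖ := by ring
  have hdiff : ‖(U1 0 t - U2 0 t).comp ι‖ ≤ c * C ^ 2 * K * t := by
    refine ContinuousLinearMap.opNorm_le_bound _ (by have := ht.1; positivity) fun f => ?_
    have := norm_propagator_sub_le (A1 := fun s => A (ξ1 s)) (A2 := fun s => A (ξ2 s))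
      (hgen1 0) (hgen2 t) (fun s => hcompat2 s t) (hU1B 0) (hid1 0) (hid2 t) ht.1 f
      (hintegrand f)
    simpa [mul_right_comm _ ‖f‖] using this
  calc ‖opDual ι (opDual (U1 0 t) μ - opDual (U2 0 t) μ)‖
      ≤ ‖μ‖ * ‖(U1 0 t - U2 0 t).comp ι‖ := by
        rw [opDual_opDual_sub]; exact norm_opDual_apply_le _ _
    _ ≤ ‖μ‖ * (c * C ^ 2 * K * t) := by gcongr
    _ = c * C ^ 2 * t * ‖μ‖ * K := by ring

/-- Lipschitz dependence of the dual propagators on the frozen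
coefficient curve: with `‖A[ξ]−A[η]‖_{D→B} ≤ c‖ξ−η‖_{D*}` and
`‖U^{t,s}[ξ.]‖_{D→D}, ‖U^{t,s}[ξ.]‖_{B→B} ≤ C`, one has
`‖(V^{t,0}[ξ¹]−V^{t,0}[ξ²])μ‖_{D*} ≤ c C² t ‖μ‖_{B*} sup_{s≤t}‖ξ¹_s−ξ²_s‖_{D*}`.
Here `D ⊆ B` via the norm-nonincreasing embedding `ι`, the `D*`-norm of
`ξ ∈ B*` is `‖opDual ι ξ‖`, and `V^{t,0}[ξ.] = (U^{0,t}[ξ.])*`. -/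
theorem dual_propagator_lipschitz_in_coefficient_curve
    {D B : Type*} [NormedAddCommGroup D] [NormedSpace ℝ D]
    [NormedAddCommGroup B] [NormedSpace ℝ B] [CompleteSpace B]
    (ι : D →L[ℝ] B) (hιinj : Function.Injective ι) (hιnorm : ∀ f : D, ‖ι f‖ ≤ ‖f‖)
    (c C : ℝ) (hc : 0 ≤ c) (hC : 0 ≤ C)
    (M : Set (StrongDual ℝ B)) (hbdd : Bornology.IsBounded M)
    (A : StrongDual ℝ B → D →L[ℝ] B)
    (hALip : ∀ ξ η : StrongDual ℝ B, ‖A ξ - A η‖ ≤ c * ‖opDual ι (ξ - η)‖)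
    (r : ℝ) (hr : 0 < r) (μ : StrongDual ℝ B) (hμ : μ ∈ M)
    (ξ1 ξ2 : ℝ → StrongDual ℝ B)
    (hξ1M : ∀ s ∈ Set.Icc (0 : ℝ) r, ξ1 s ∈ M) (hξ10 : ξ1 0 = μ)
    (hξ2M : ∀ s ∈ Set.Icc (0 : ℝ) r, ξ2 s ∈ M) (hξ20 : ξ2 0 = μ)
    (hξ1cont : ContinuousOn (fun s => opDual ι (ξ1 s)) (Set.Icc 0 r))
    (hξ2cont : ContinuousOn (fun s => opDual ι (ξ2 s)) (Set.Icc 0 r))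
    (U1 U2 : ℝ → ℝ → B →L[ℝ] B) (UD1 UD2 : ℝ → ℝ → D →L[ℝ] D)
    (hcompat1 : ∀ (t s : ℝ) (f : D), U1 t s (ι f) = ι (UD1 t s f))
    (hcompat2 : ∀ (t s : ℝ) (f : D), U2 t s (ι f) = ι (UD2 t s f))
    (hU1B : ∀ t s : ℝ, t ≤ s → ‖U1 t s‖ ≤ C) (hU2B : ∀ t s : ℝ, t ≤ s → ‖U2 t s‖ ≤ C)
    (hU1D : ∀ t s : ℝ, t ≤ s → ‖UD1 t s‖ ≤ C) (hU2D : ∀ t s : ℝ, t ≤ s → ‖UD2 t s‖ ≤ C)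
    (hid1 : ∀ t : ℝ, U1 t t = ContinuousLinearMap.id ℝ B)
    (hid2 : ∀ t : ℝ, U2 t t = ContinuousLinearMap.id ℝ B)
    (hchain1 : ∀ t s u : ℝ, t ≤ s → s ≤ u → (U1 t s).comp (U1 s u) = U1 t u)
    (hchain2 : ∀ t s u : ℝ, t ≤ s → s ≤ u → (U2 t s).comp (U2 s u) = U2 t u)
    -- generation of U1, U2 by the frozen families A[ξ1_t], A[ξ2_t] on D:
    (hgen1 : ∀ (t : ℝ) (f : D) (s : ℝ), t ≤ s →
      HasDerivAt (fun u : ℝ => U1 t u (ι f)) (U1 t s (A (ξ1 s) f)) s)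
    (hgen2 : ∀ (u : ℝ) (f : D) (s : ℝ), s ≤ u →
      HasDerivAt (fun v : ℝ => U2 v u (ι f)) (-(A (ξ2 s) (UD2 s u f))) s) :
    ∀ t ∈ Set.Icc (0 : ℝ) r, ∀ K : ℝ,
      (∀ s ∈ Set.Icc (0 : ℝ) t, ‖opDual ι (ξ1 s - ξ2 s)‖ ≤ K) →
      ‖opDual ι (opDual (U1 0 t) μ - opDual (U2 0 t) μ)‖ ≤
        c * C ^ 2 * t * ‖μ‖ * K :=
  dual_propagator_lipschitz_in_coefficient_curve_general ι c C hc hC A hALip r μ ξ1 ξ2 U1 U2 UD2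
    hcompat2 hU1B hU2D hid1 hid2 hgen1 hgen2
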